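/- Every element a of the F_2-algebra A_0 can be written uniquely as a = a_0 · V_0^j where j ≥ 0 and a_0 is a monomial in the generators U_i, s_i (or an idempotent) containing no factor of V_0, and the Maslov grading satisfies m(a) = j(2N − 2). -/

import Mathlib

/-- The ground ring 𝔽₂[V₀], realized as the polynomial ring over ℤ/2. -/
abbrev GroundRing := Polynomial (ZMod 2)

/-- Generators of the associative algebra `A₀`: idempotents `I i`, and elements
`U i`, `s i`, for `i` ranging over `Fin N` (indices are taken mod `N`). -/
inductive AGen (N : ℕ) : Type
  | I : Fin N → AGen N
  | U : Fin N → AGen N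
  | s : Fin N → AGen N
deriving DecidableEq

variable (N : ℕ) [NeZero N]

open FreeAlgebra in
/-- The defining relations of `A₀` from the paper:
`I_i I_j = δ_{ij} I_i`; `I_j U_i = U_i I_j = δ_{ij} U_i`; `I_j s_i = δ_{ij} s_i`;
`s_i I_j = s_i` iff `j = i+1 (mod N)`; `U_i U_j = 0` for `i ≠ j`;
`U_i s_j = s_j U_i = 0`; `s_i s_j = 0` unless `j = i+1 (mod N)`. -/
inductive ARel : FreeAlgebra GroundRing (AGen N) → FreeAlgebra GroundRing (AGen N) → Prop
  | II (i j : Fin N) : ARel (ι GroundRing (AGen.I i) * ι GroundRing (AGen.I j))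
      (if i = j then ι GroundRing (AGen.I i) else 0)
  | IU (i j : Fin N) : ARel (ι GroundRing (AGen.I j) * ι GroundRing (AGen.U i))
      (if i = j then ι GroundRing (AGen.U i) else 0)
  | UI (i j : Fin N) : ARel (ι GroundRing (AGen.U i) * ι GroundRing (AGen.I j))
      (if i = j then ι GroundRing (AGen.U i) else 0)
  | Is (i j : Fin N) : ARel (ι GroundRing (AGen.I j) * ι GroundRing (AGen.s i))
      (if j = i then ι GroundRing (AGen.s i) else 0)
  | sI (i j : Fin N) : ARel (ι GroundRing (AGen.s i) * ι GroundRing (AGen.I j))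
      (if j = i + 1 then ι GroundRing (AGen.s i) else 0)
  | UU (i j : Fin N) : i ≠ j → ARel (ι GroundRing (AGen.U i) * ι GroundRing (AGen.U j)) 0
  | Us (i j : Fin N) : ARel (ι GroundRing (AGen.U i) * ι GroundRing (AGen.s j)) 0
  | sU (i j : Fin N) : ARel (ι GroundRing (AGen.s j) * ι GroundRing (AGen.U i)) 0
  | ss (i j : Fin N) : j ≠ i + 1 → ARel (ι GroundRing (AGen.s i) * ι GroundRing (AGen.s j)) 0

/-- The associative algebra `A₀`, presented by the above generators and relations. -/
abbrev A0 := RingQuot (ARel N)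

/-- The idempotent generator `I i` of `A₀`. -/
noncomputable def aI (i : Fin N) : A0 N :=
  RingQuot.mkAlgHom GroundRing (ARel N) (FreeAlgebra.ι GroundRing (AGen.I i))

/-- The generator `U i` of `A₀`. -/
noncomputable def aU (i : Fin N) : A0 N :=
  RingQuot.mkAlgHom GroundRing (ARel N) (FreeAlgebra.ι GroundRing (AGen.U i))

/-- The generator `s i` of `A₀`. -/
noncomputable def aS (i : Fin N) : A0 N :=
  RingQuot.mkAlgHom GroundRing (ARel N) (FreeAlgebra.ι GroundRing (AGen.s i))

open Fin.NatCast in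
/-- `s_{ii} = s_i s_{i+1} ⋯ s_{i-1}`, the full cyclic product of the `N` generators
`s_j` starting at index `i` (indices mod `N`). -/
noncomputable def scyc (i : Fin N) : A0 N :=
  ((List.range N).map (fun k => aS N (i + (k : Fin N)))).prod

/-- The central element `V₀` of `A₀` (the polynomial variable of the ground ring). -/
noncomputable def V0elt : A0 N := algebraMap GroundRing (A0 N) Polynomial.X

/-- Letters for monomials of `A₀` over 𝔽₂[V₀]: the generators `I i`, `U i`, `s i`,
and the central variable `V₀`. -/
inductive AVGen (N : ℕ) : Type
  | I : Fin N → AVGen N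
  | U : Fin N → AVGen N
  | s : Fin N → AVGen N
  | V : AVGen N
deriving DecidableEq

/-- The image in `A₀` of a letter. -/
noncomputable def avToA0 : AVGen N → A0 N
  | AVGen.I i => aI N i
  | AVGen.U i => aU N i
  | AVGen.s i => aS N i
  | AVGen.V => V0elt N

/-- The product in `A₀` of a word in the letters. -/
noncomputable def prodAV (w : List (AVGen N)) : A0 N := (w.map (avToA0 N)).prod

/-- The Maslov grading of a monomial word: `m(V₀) = 2N − 2` and `m(I_i) = m(U_i) = m(s_i) = 0`,
extended additively over products. -/
def maslovW (w : List (AVGen N)) : ℤ := (2 * (N : ℤ) - 2) * (w.count AVGen.V)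

/-!
Since `V₀` is central, the `V₀`-letters of a word can be collected in front, which gives
the factorization; the Maslov grading counts these letters, so `2N − 2 ≠ 0` determines `j`.
Uniqueness of `a₀` then amounts to `V₀` being a non-zero-divisor in `A₀`. To see this, let
`A₀` act on the free `𝔽₂[V₀]`-module on the normal monomials `1`, `I_i`, `U_i^(k+1)` and
`s_i s_{i+1} ⋯ s_{i+k}`: a generator times a normal monomial is again a normal monomial or
`0`. Evaluating normal monomials in `A₀` is a left inverse of `a ↦ a · 1`, so `A₀` embeds
linearly into a free module and has no `𝔽₂[V₀]`-torsion.
-/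

lemma List.prod_map_eq_pow_count_mul_prod_map_filter_ne {α M : Type*} [Monoid M] [DecidableEq α]
    (f : α → M) {a : α} (h : ∀ x, Commute (f a) (f x)) (l : List α) :
    (l.map f).prod = f a ^ l.count a * ((l.filter (· ≠ a)).map f).prod := by
  induction l with
  | nil => simp
  | cons x l ih =>
    by_cases hx : x = a
    · subst hx
      simp [ih, pow_succ', mul_assoc]
    · simp [hx, ih, ← mul_assoc, ((h x).pow_left _).eq]

namespace Finsupp

variable (R : Type*) [Semiring R] {α β γ : Type*}

noncomputable def linearOfPartial (f : α → Option β) : (α →₀ R) →ₗ[R] (β →₀ R) :=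
  linearCombination R fun a => (f a).elim 0 (single · 1)

variable {R}

lemma linearOfPartial_single (f : α → Option β) (a : α) (c : R) :
    linearOfPartial R f (single a c) = c • (f a).elim 0 (single · 1) :=
  linearCombination_single ..

lemma linearOfPartial_none : linearOfPartial R (fun _ : α => (none : Option β)) = 0 :=
  lhom_ext fun a c => by simp [linearOfPartial_single]

lemma linearOfPartial_comp (f : β → Option γ) (g : α → Option β) :
    linearOfPartial R f ∘ₗ linearOfPartial R g = linearOfPartial R fun a => (g a).bind f :=
  lhom_ext fun a c => by
    simp only [LinearMap.comp_apply, linearOfPartial_single, map_smul]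
    cases g a <;> simp [linearOfPartial_single]

end Finsupp

section Relations

variable {N}

noncomputable def gen (g : AGen N) : A0 N :=
  RingQuot.mkAlgHom GroundRing (ARel N) (FreeAlgebra.ι GroundRing g)

@[simp] lemma gen_I (i : Fin N) : gen (.I i) = aI N i := rfl
@[simp] lemma gen_U (i : Fin N) : gen (.U i) = aU N i := rfl
@[simp] lemma gen_s (i : Fin N) : gen (.s i) = aS N i := rfl

lemma aI_mul_aI (i j : Fin N) : aI N i * aI N j = if i = j then aI N i else 0 := by
  simpa [aI, apply_ite (RingQuot.mkAlgHom _ _)] using RingQuot.mkAlgHom_rel GroundRing (ARel.II i j)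

lemma aI_mul_aU (i j : Fin N) : aI N i * aU N j = if j = i then aU N j else 0 := by
  simpa [aI, aU, apply_ite (RingQuot.mkAlgHom _ _)] using
    RingQuot.mkAlgHom_rel GroundRing (ARel.IU j i)

lemma aU_mul_aI (i j : Fin N) : aU N i * aI N j = if i = j then aU N i else 0 := by
  simpa [aI, aU, apply_ite (RingQuot.mkAlgHom _ _)] using
    RingQuot.mkAlgHom_rel GroundRing (ARel.UI i j)

lemma aI_mul_aS (i j : Fin N) : aI N i * aS N j = if i = j then aS N j else 0 := by
  simpa [aI, aS, apply_ite (RingQuot.mkAlgHom _ _)] using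
    RingQuot.mkAlgHom_rel GroundRing (ARel.Is j i)

lemma aS_mul_aI (i j : Fin N) : aS N i * aI N j = if j = i + 1 then aS N i else 0 := by
  simpa [aI, aS, apply_ite (RingQuot.mkAlgHom _ _)] using
    RingQuot.mkAlgHom_rel GroundRing (ARel.sI i j)

lemma aU_mul_aU {i j : Fin N} (h : i ≠ j) : aU N i * aU N j = 0 := by
  simpa [aU] using RingQuot.mkAlgHom_rel GroundRing (ARel.UU i j h)

lemma aU_mul_aS (i j : Fin N) : aU N i * aS N j = 0 := by
  simpa [aU, aS] using RingQuot.mkAlgHom_rel GroundRing (ARel.Us i j)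

lemma aS_mul_aU (i j : Fin N) : aS N i * aU N j = 0 := by
  simpa [aU, aS] using RingQuot.mkAlgHom_rel GroundRing (ARel.sU j i)

lemma aS_mul_aS {i j : Fin N} (h : j ≠ i + 1) : aS N i * aS N j = 0 := by
  simpa [aS] using RingQuot.mkAlgHom_rel GroundRing (ARel.ss i j h)

noncomputable def aSPath : Fin N → ℕ → A0 N
  | i, 0 => aS N i
  | i, k + 1 => aS N i * aSPath (i + 1) k

lemma aI_mul_aSPath (i j : Fin N) (k : ℕ) :
    aI N i * aSPath j k = if i = j then aSPath j k else 0 := by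
  cases k <;> simp [aSPath, ← mul_assoc, aI_mul_aS, ite_mul]

lemma aU_mul_aSPath (i j : Fin N) (k : ℕ) : aU N i * aSPath j k = 0 := by
  cases k <;> simp [aSPath, ← mul_assoc, aU_mul_aS]

lemma aS_mul_aSPath (i j : Fin N) (k : ℕ) :
    aS N i * aSPath j k = if j = i + 1 then aSPath i (k + 1) else 0 := by
  split_ifs with h
  · subst h; rfl
  · cases k <;> simp [aSPath, ← mul_assoc, aS_mul_aS h]

lemma aI_mul_aU_pow (i j : Fin N) (k : ℕ) :
    aI N i * aU N j ^ (k + 1) = if j = i then aU N j ^ (k + 1) else 0 := by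
  rw [pow_succ', ← mul_assoc, aI_mul_aU]
  split_ifs <;> simp

lemma aU_mul_aU_pow (i j : Fin N) (k : ℕ) :
    aU N i * aU N j ^ (k + 1) = if i = j then aU N j ^ (k + 2) else 0 := by
  split_ifs with h
  · rw [h, ← pow_succ']
  · rw [pow_succ', ← mul_assoc, aU_mul_aU h, zero_mul]

lemma aS_mul_aU_pow (i j : Fin N) (k : ℕ) : aS N i * aU N j ^ (k + 1) = 0 := by
  rw [pow_succ', ← mul_assoc, aS_mul_aU, zero_mul]

end Relations

/-- Normal monomials of `A₀` without a factor `V₀`: `uPow i k` stands for `U_i^(k+1)` and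
`sPath i k` for `s_i s_{i+1} ⋯ s_{i+k}`. -/
inductive NormalMonomial (N : ℕ) : Type
  | one : NormalMonomial N
  | idem : Fin N → NormalMonomial N
  | uPow : Fin N → ℕ → NormalMonomial N
  | sPath : Fin N → ℕ → NormalMonomial N

namespace NormalMonomial

variable {N}

/-- Left multiplication by a generator; `none` stands for the product `0`. -/
def genMul : AGen N → NormalMonomial N → Option (NormalMonomial N)
  | .I i, one => some (idem i)
  | .I i, idem j => if i = j then some (idem j) else none
  | .I i, uPow j k => if i = j then some (uPow j k) else none
  | .I i, sPath j k => if i = j then some (sPath j k) else none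
  | .U i, one => some (uPow i 0)
  | .U i, idem j => if i = j then some (uPow i 0) else none
  | .U i, uPow j k => if i = j then some (uPow j (k + 1)) else none
  | .U _, sPath _ _ => none
  | .s i, one => some (sPath i 0)
  | .s i, idem j => if j = i + 1 then some (sPath i 0) else none
  | .s _, uPow _ _ => none
  | .s i, sPath j k => if j = i + 1 then some (sPath i (k + 1)) else none

end NormalMonomial

section Representation

open NormalMonomial Finsupp

abbrev NormalModule (N : ℕ) := NormalMonomial N →₀ GroundRing

noncomputable def freeRep :
    FreeAlgebra GroundRing (AGen N) →ₐ[GroundRing] Module.End GroundRing (NormalModule N) :=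
  FreeAlgebra.lift GroundRing fun g => linearOfPartial GroundRing (genMul g)

lemma freeRep_respects_rel ⦃x y : FreeAlgebra GroundRing (AGen N)⦄ (h : ARel N x y) :
    freeRep N x = freeRep N y := by
  induction h <;>
  · simp only [map_mul, map_zero, freeRep, FreeAlgebra.lift_ι_apply,
      apply_ite (FreeAlgebra.lift _ _), Module.End.mul_eq_comp, linearOfPartial_comp,
      ← linearOfPartial_none]
    (try split_ifs) <;> congr 1 <;> funext b <;> cases b <;> grind [genMul]

noncomputable def rep : A0 N →ₐ[GroundRing] Module.End GroundRing (NormalModule N) :=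
  RingQuot.liftAlgHom GroundRing ⟨freeRep N, freeRep_respects_rel N⟩

variable {N}

lemma rep_gen (g : AGen N) : rep N (gen g) = linearOfPartial GroundRing (genMul g) := by
  simp [rep, gen, RingQuot.liftAlgHom_mkAlgHom_apply, freeRep]

noncomputable def NormalMonomial.toA0 : NormalMonomial N → A0 N
  | one => 1
  | idem i => aI N i
  | uPow i k => aU N i ^ (k + 1)
  | sPath i k => aSPath i k

lemma NormalMonomial.elim_genMul (g : AGen N) (b : NormalMonomial N) :
    (genMul g b).elim 0 toA0 = gen g * b.toA0 := by
  cases g <;> cases b <;>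
    simp only [genMul, toA0, apply_ite (Option.elim · 0 toA0), Option.elim_some,
      Option.elim_none, mul_one, aI_mul_aI, aI_mul_aU_pow, aI_mul_aSPath, aU_mul_aI, aU_mul_aU_pow,
      aU_mul_aSPath, aS_mul_aI, aS_mul_aU_pow, aS_mul_aSPath, gen_I, gen_U, gen_s] <;>
    grind [aSPath]

noncomputable def evalNormal : NormalModule N →ₗ[GroundRing] A0 N :=
  linearCombination GroundRing toA0

lemma evalNormal_comp_linearOfPartial_genMul (g : AGen N) :
    evalNormal ∘ₗ linearOfPartial GroundRing (genMul g) =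
      LinearMap.mulLeft GroundRing (gen g) ∘ₗ evalNormal :=
  lhom_ext fun b c => by
    simp only [LinearMap.comp_apply, linearOfPartial_single, map_smul, LinearMap.mulLeft_apply,
      evalNormal, linearCombination_single, ← elim_genMul]
    cases genMul g b <;> simp

lemma evalNormal_rep (a : A0 N) (v : NormalModule N) :
    evalNormal (rep N a v) = a * evalNormal v := by
  obtain ⟨x, rfl⟩ := RingQuot.mkAlgHom_surjective GroundRing (ARel N) a
  induction x using FreeAlgebra.induction generalizing v with
  | grade0 r => simp [Algebra.smul_def]
  | grade1 g =>
    rw [← gen, rep_gen]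
    exact congr($(evalNormal_comp_linearOfPartial_genMul g) v)
  | mul x y hx hy => simp only [map_mul, Module.End.mul_apply, hx, hy, mul_assoc]
  | add x y hx hy => simp only [map_add, LinearMap.add_apply, hx, hy, add_mul]

lemma evalNormal_rep_single_one (a : A0 N) : evalNormal (rep N a (single one 1)) = a := by
  rw [evalNormal_rep]
  simp [evalNormal, toA0]

instance : Module.IsTorsionFree GroundRing (A0 N) :=
  Function.Injective.moduleIsTorsionFree (fun a => rep N a (single one 1))
    (Function.LeftInverse.injective evalNormal_rep_single_one) fun _ _ => by simp

lemma isLeftRegular_V0elt : IsLeftRegular (V0elt N) := fun a b h =>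
  smul_right_injective (A0 N) (Polynomial.X_ne_zero (R := ZMod 2)) <| by
    simpa [V0elt, Algebra.smul_def] using h

end Representation

lemma prodAV_eq_V0elt_pow_mul (l : List (AVGen N)) :
    prodAV N l = V0elt N ^ l.count .V * prodAV N (l.filter (· ≠ .V)) :=
  l.prod_map_eq_pow_count_mul_prod_map_filter_ne (avToA0 N)
    fun _ => Algebra.commute_algebraMap_left _ _

theorem V0_factorization_unique (hN : 2 < N) (l : List (AVGen N)) :
    ∃! p : ℕ × A0 N,
      (∃ w : List (AVGen N), AVGen.V ∉ w ∧ p.2 = prodAV N w) ∧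
      prodAV N l = (V0elt N) ^ p.1 * p.2 ∧
      maslovW N l = p.1 * (2 * (N : ℤ) - 2) := by
  have hm : 2 * (N : ℤ) - 2 ≠ 0 := by omega
  refine ⟨(l.count .V, prodAV N (l.filter (· ≠ .V))),
    ⟨⟨_, by simp, rfl⟩, prodAV_eq_V0elt_pow_mul N l, by rw [maslovW, mul_comm]⟩, ?_⟩
  rintro ⟨j, a⟩ ⟨-, hprod, hmaslov⟩
  obtain rfl : j = l.count .V := by
    rw [maslovW, mul_comm] at hmaslov
    exact_mod_cast (mul_right_cancel₀ hm hmaslov).symm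
  exact Prod.ext rfl (isLeftRegular_V0elt.pow _ (hprod.symm.trans (prodAV_eq_V0elt_pow_mul N l)))
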